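/- For any weight vector χ, the open subspace U = {[z]_χ ∈ P(χ) : z_n ≠ 0} of P(χ) (this condition is independent of the chosen representative z ∈ S^{2n+1}) is homeomorphic to the orbit space ℂ^n/μ_{χ_n}, where ζ ∈ μ_{χ_n} acts on ℂ^n by ζ·(w_0, …, w_{n-1}) = (ζ^{χ_0}w_0, …, ζ^{χ_{n-1}}w_{n-1}) and the orbit space carries the quotient topology. In particular, the point [0, …, 0, 1]_χ has a neighbourhood of the form ℂ^n/μ_{χ_n}, so P(χ) has at worst finite cyclic quotient singularities. -/

import Mathlib

noncomputable section

/-- The unit sphere in `ℂ^m` (the sphere `S^{2m-1}`). -/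
abbrev Sph (m : ℕ) : Type := {z : Fin m → ℂ // ∑ i, ‖z i‖ ^ 2 = 1}

/-- The relation on the sphere whose quotient is the weighted projective space `P(χ)`:
`z ∼ w` iff `w = t ·_χ z` for some unimodular `t`. -/
def wRel (m : ℕ) (χ : Fin m → ℕ) (z w : Sph m) : Prop :=
  ∃ t : ℂ, ‖t‖ = 1 ∧ ∀ i, (w : Fin m → ℂ) i = t ^ χ i * (z : Fin m → ℂ) i

/-- The weighted projective space `P(χ)`, with the quotient topology. -/
abbrev WP (m : ℕ) (χ : Fin m → ℕ) : Type := Quot (wRel m χ)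

/-- The class `[z]_χ` of a point of the sphere in `P(χ)`. -/
def wpMk (m : ℕ) (χ : Fin m → ℕ) (z : Sph m) : WP m χ := Quot.mk _ z

/-- `s(χ,ω)`: the least positive integer `s` with `ω i ∣ s * χ i` for all `i`. -/
def sVal (m : ℕ) (χ ω : Fin m → ℕ) : ℕ := sInf {s : ℕ | 0 < s ∧ ∀ i, ω i ∣ s * χ i}

/-- The exponents `d i = s(χ,ω)·χ i/ω i` of the map `e(χ/ω)`. -/
def dExp (m : ℕ) (χ ω : Fin m → ℕ) (i : Fin m) : ℕ := sVal m χ ω * χ i / ω i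

/-- `IsNorm m χ v w` says that `w` is the normalisation `N_χ(v)`, i.e. `w` lies on the
sphere and has the form `(λ^{χ_0} v_0, …)` for some real `λ > 0`. -/
def IsNorm (m : ℕ) (χ : Fin m → ℕ) (v : Fin m → ℂ) (w : Sph m) : Prop :=
  ∃ l : ℝ, 0 < l ∧ ∀ i, (w : Fin m → ℂ) i = (l : ℂ) ^ χ i * v i

/-- Coordinatewise powers of a point of the sphere. -/
def powVec (m : ℕ) (d : Fin m → ℕ) (z : Sph m) : Fin m → ℂ :=
  fun i => (z : Fin m → ℂ) i ^ d i

/-- `IsEMap m χ ω e` says that `e` is the canonical map `e(χ/ω) : P(ω) → P(χ)`: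
it is continuous and sends `[z]_ω` to `[N_χ(z_0^{d_0}, …, z_n^{d_n})]_χ`. -/
def IsEMap (m : ℕ) (χ ω : Fin m → ℕ) (e : WP m ω → WP m χ) : Prop :=
  Continuous e ∧ ∀ z w : Sph m,
    IsNorm m χ (powVec m (dExp m χ ω) z) w → e (wpMk m ω z) = wpMk m χ w

/-!
On `z_n ≠ 0` a point `[z]_χ` has the affine coordinates `(z_i / s^{χ_i})_{i<n}`, where `s` is a
`χ_n`-th root of `z_n`: they do not depend on the representative `z`, and another choice of root
changes them by the action of `μ_{χ_n}`. The inverse is `w ↦ [N_χ(w, 1)]_χ`, where `N_χ` rescales a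
nonzero vector `v` to the point `λ ·_χ v` of the sphere with the unique `λ > 0`; both composites are
the identity because `N_χ(c ·_χ v)` and `N_χ(v)` differ by a unimodular factor for every `c ≠ 0`.
The chart is continuous since a nonzero complex number has a continuous local `χ_n`-th root, and
its inverse since `λ` depends continuously on `v`, `λ ↦ ‖λ ·_χ v‖²` being strictly increasing.
-/

open Filter Topology Set

section WeightedAction

variable {m : ℕ} (χ : Fin m → ℕ)

def wsmul (t : ℂ) (v : Fin m → ℂ) : Fin m → ℂ := fun i => t ^ χ i * v i

@[simp]
lemma wsmul_apply (t : ℂ) (v : Fin m → ℂ) (i : Fin m) : wsmul χ t v i = t ^ χ i * v i := rfl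

lemma wsmul_wsmul (s t : ℂ) (v : Fin m → ℂ) : wsmul χ s (wsmul χ t v) = wsmul χ (s * t) v := by
  ext i; simp [mul_pow, mul_assoc]

lemma wsmul_ne_zero {t : ℂ} {v : Fin m → ℂ} (ht : t ≠ 0) (hv : v ≠ 0) : wsmul χ t v ≠ 0 := by
  obtain ⟨i, hi⟩ := Function.ne_iff.mp hv
  exact Function.ne_iff.mpr ⟨i, mul_ne_zero (pow_ne_zero _ ht) hi⟩

lemma continuous_wsmul : Continuous fun p : ℂ × (Fin m → ℂ) => wsmul χ p.1 p.2 :=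
  continuous_pi fun i => (continuous_fst.pow _).mul ((continuous_apply i).comp continuous_snd)

lemma wRel_equivalence : Equivalence (wRel m χ) where
  refl _ := ⟨1, norm_one, fun _ => by simp⟩
  symm := by
    rintro z w ⟨t, ht, h⟩
    have ht0 : t ≠ 0 := norm_ne_zero_iff.mp (by simp [ht])
    exact ⟨t⁻¹, by simp [ht], fun i => by
      rw [h i, inv_pow, inv_mul_cancel_left₀ (pow_ne_zero _ ht0)]⟩
  trans := by
    rintro z w v ⟨t, ht, h⟩ ⟨s, hs, h'⟩
    exact ⟨s * t, by simp [ht, hs], fun i => by rw [h' i, h i, mul_pow, mul_assoc]⟩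

lemma wpMk_eq_wpMk_iff {z w : Sph m} : wpMk m χ z = wpMk m χ w ↔ wRel m χ z w :=
  (Quot.eq).trans (wRel_equivalence χ).eqvGen_iff

end WeightedAction

section Normalization

variable {m : ℕ} (χ : Fin m → ℕ)

/-- `N_χ(v) = λ ·_χ v` for the `λ > 0` at which this is `1`. -/
def scaleSq (v : Fin m → ℂ) (l : ℝ) : ℝ := ∑ i, ‖wsmul χ (l : ℂ) v i‖ ^ 2

/-- Junk for `v = 0`, where no such `λ` exists. -/
def wScale (v : Fin m → ℂ) : ℝ := Classical.epsilon fun l => 0 < l ∧ scaleSq χ v l = 1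

def wNormalize (v : Fin m → ℂ) : Fin m → ℂ := wsmul χ (wScale χ v : ℂ) v

lemma scaleSq_eq_sum (v : Fin m → ℂ) {l : ℝ} (hl : 0 ≤ l) :
    scaleSq χ v l = ∑ i, (l ^ χ i * ‖v i‖) ^ 2 := by
  simp [scaleSq, Complex.norm_real, abs_of_nonneg hl]

lemma continuous_scaleSq {X : Type*} [TopologicalSpace X] {f : X → Fin m → ℂ} {g : X → ℝ}
    (hf : Continuous f) (hg : Continuous g) : Continuous fun x => scaleSq χ (f x) (g x) := by
  simp only [scaleSq, wsmul_apply]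
  fun_prop

lemma monotoneOn_scaleSq (v : Fin m → ℂ) : MonotoneOn (scaleSq χ v) (Ici 0) := by
  intro a (ha : 0 ≤ a) b (hb : 0 ≤ b) hab
  rw [scaleSq_eq_sum χ v ha, scaleSq_eq_sum χ v hb]
  gcongr

variable {χ} (hχ : ∀ i, 1 ≤ χ i)
include hχ

lemma strictMonoOn_scaleSq {v : Fin m → ℂ} (hv : v ≠ 0) : StrictMonoOn (scaleSq χ v) (Ici 0) := by
  intro a (ha : 0 ≤ a) b (hb : 0 ≤ b) hab
  obtain ⟨j, hj⟩ := Function.ne_iff.mp hv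
  rw [scaleSq_eq_sum χ v ha, scaleSq_eq_sum χ v hb]
  refine Finset.sum_lt_sum (fun i _ => by gcongr) ⟨j, Finset.mem_univ _, ?_⟩
  have : a ^ χ j < b ^ χ j := pow_lt_pow_left₀ hab ha (by have := hχ j; omega)
  have : 0 < ‖v j‖ := norm_pos_iff.mpr hj
  gcongr

lemma scaleSq_zero (v : Fin m → ℂ) : scaleSq χ v 0 = 0 := by
  rw [scaleSq_eq_sum χ v le_rfl]
  exact Finset.sum_eq_zero fun i _ => by simp [zero_pow (by have := hχ i; omega : χ i ≠ 0)]

lemma exists_scaleSq_eq_one {v : Fin m → ℂ} (hv : v ≠ 0) : ∃ l, 0 < l ∧ scaleSq χ v l = 1 := by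
  obtain ⟨j, hj⟩ := Function.ne_iff.mp hv
  have hj' : 0 < ‖v j‖ ^ 2 := by positivity
  have htend : Tendsto (fun l : ℝ => (l ^ χ j) ^ 2 * ‖v j‖ ^ 2) atTop atTop :=
    ((Filter.tendsto_pow_atTop two_ne_zero).comp
      (Filter.tendsto_pow_atTop (by have := hχ j; omega))).atTop_mul_const hj'
  obtain ⟨b, hb1, hb0⟩ := ((htend.eventually_ge_atTop 1).and (eventually_ge_atTop 0)).exists
  have hbig : 1 ≤ scaleSq χ v b := calc
    1 ≤ (b ^ χ j * ‖v j‖) ^ 2 := by rwa [mul_pow]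
    _ ≤ ∑ i, (b ^ χ i * ‖v i‖) ^ 2 :=
      Finset.single_le_sum (f := fun i => (b ^ χ i * ‖v i‖) ^ 2)
        (fun i _ => sq_nonneg _) (Finset.mem_univ j)
    _ = scaleSq χ v b := (scaleSq_eq_sum χ v hb0).symm
  obtain ⟨l, hl, hl1⟩ := intermediate_value_Icc hb0
    (continuous_scaleSq χ continuous_const continuous_id).continuousOn
    ⟨(scaleSq_zero hχ v).le.trans zero_le_one, hbig⟩
  refine ⟨l, hl.1.lt_of_ne ?_, hl1⟩
  rintro rfl
  simp [scaleSq_zero hχ v] at hl1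

lemma wScale_pos {v : Fin m → ℂ} (hv : v ≠ 0) : 0 < wScale χ v :=
  (Classical.epsilon_spec (exists_scaleSq_eq_one hχ hv)).1

lemma scaleSq_wScale {v : Fin m → ℂ} (hv : v ≠ 0) : scaleSq χ v (wScale χ v) = 1 :=
  (Classical.epsilon_spec (exists_scaleSq_eq_one hχ hv)).2

lemma wScale_eq {v : Fin m → ℂ} (hv : v ≠ 0) {l : ℝ} (hl : 0 < l) (h : scaleSq χ v l = 1) :
    wScale χ v = l :=
  (strictMonoOn_scaleSq hχ hv).injOn (wScale_pos hχ hv).le hl.le (by rw [h, scaleSq_wScale hχ hv])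

/-- `λ` is squeezed between any `a < b` with `scaleSq v a < 1 < scaleSq v b`, and these strict
inequalities persist near `v`. -/
lemma continuousAt_wScale {v₀ : Fin m → ℂ} (hv₀ : v₀ ≠ 0) : ContinuousAt (wScale χ) v₀ := by
  have hcont (a : ℝ) : Continuous fun v => scaleSq χ v a :=
    continuous_scaleSq χ continuous_id continuous_const
  have hne : ∀ᶠ v in 𝓝 v₀, v ≠ 0 := eventually_ne_nhds hv₀
  have hpos := wScale_pos hχ hv₀
  refine tendsto_order.2 ⟨fun a ha => ?_, fun a ha => ?_⟩
  · rcases lt_or_ge a 0 with ha0 | ha0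
    · filter_upwards [hne] with v hv using ha0.trans (wScale_pos hχ hv)
    have hlt : scaleSq χ v₀ a < 1 := by
      rw [← scaleSq_wScale hχ hv₀]
      exact strictMonoOn_scaleSq hχ hv₀ ha0 hpos.le ha
    filter_upwards [hne, (hcont a).continuousAt.eventually_lt continuousAt_const hlt] with v hv hva
    by_contra! h
    have := monotoneOn_scaleSq χ v (wScale_pos hχ hv).le ha0 h
    rw [scaleSq_wScale hχ hv] at this
    linarith
  · have ha0 : 0 ≤ a := hpos.le.trans ha.le
    have hgt : 1 < scaleSq χ v₀ a := by
      rw [← scaleSq_wScale hχ hv₀]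
      exact strictMonoOn_scaleSq hχ hv₀ hpos.le ha0 ha
    filter_upwards [hne, continuousAt_const.eventually_lt (hcont a).continuousAt hgt] with v hv hva
    by_contra! h
    have := monotoneOn_scaleSq χ v ha0 (wScale_pos hχ hv).le h
    rw [scaleSq_wScale hχ hv] at this
    linarith

lemma sum_norm_wNormalize_sq {v : Fin m → ℂ} (hv : v ≠ 0) : ∑ i, ‖wNormalize χ v i‖ ^ 2 = 1 :=
  scaleSq_wScale hχ hv

lemma wNormalize_of_sum_norm_sq {z : Fin m → ℂ} (hz : ∑ i, ‖z i‖ ^ 2 = 1) :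
    wNormalize χ z = z := by
  have hz0 : z ≠ 0 := by rintro rfl; simp at hz
  have h1 : wScale χ z = 1 := wScale_eq hχ hz0 one_pos (by simpa [scaleSq] using hz)
  ext i
  simp [wNormalize, h1]

lemma wNormalize_wsmul {v : Fin m → ℂ} (hv : v ≠ 0) {c : ℂ} (hc : c ≠ 0) :
    wNormalize χ (wsmul χ c v) = wsmul χ (c / ‖c‖) (wNormalize χ v) := by
  have hcv := wsmul_ne_zero χ hc hv
  have hl := wScale_pos hχ hcv
  have hscale : wScale χ v = wScale χ (wsmul χ c v) * ‖c‖ := by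
    refine wScale_eq hχ hv (by positivity) ?_
    rw [← scaleSq_wScale hχ hcv]
    simp [scaleSq, Complex.norm_real, abs_of_pos hl, mul_pow, mul_assoc]
  have hnc : (‖c‖ : ℂ) ≠ 0 := by simpa using hc
  rw [wNormalize, wNormalize, hscale, wsmul_wsmul, wsmul_wsmul]
  congr 1
  push_cast
  field_simp

lemma wpMk_eq_of_wNormalize_wsmul {v : Fin m → ℂ} (hv : v ≠ 0) {c : ℂ} (hc : c ≠ 0) {x y : Sph m}
    (hx : (x : Fin m → ℂ) = wNormalize χ v)
    (hy : (y : Fin m → ℂ) = wNormalize χ (wsmul χ c v)) : wpMk m χ x = wpMk m χ y :=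
  Quot.sound ⟨c / ‖c‖, by simp [hc], fun i => by rw [hy, hx, wNormalize_wsmul hχ hv hc]; rfl⟩

end Normalization

lemma exists_continuousAt_pow_eq {N : ℕ} (hN : N ≠ 0) {c₀ : ℂ} (hc₀ : c₀ ≠ 0) :
    ∃ ρ : ℂ → ℂ, ContinuousAt ρ c₀ ∧ ∀ c, ρ c ^ N = c := by
  refine ⟨fun c => c₀ ^ (N⁻¹ : ℂ) * (c / c₀) ^ (N⁻¹ : ℂ), ?_, fun c => ?_⟩
  · refine continuousAt_const.mul ((continuousAt_cpow_const ?_).comp (continuousAt_id.div_const _))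
    simp [hc₀]
  · rw [mul_pow, Complex.cpow_nat_inv_pow _ hN, Complex.cpow_nat_inv_pow _ hN,
      mul_div_cancel₀ _ hc₀]

section AffineChart

variable {n : ℕ} (χ : Fin (n + 1) → ℕ)

def cyclicRel (u v : Fin n → ℂ) : Prop :=
  ∃ ζ : ℂ, ζ ^ χ (Fin.last n) = 1 ∧ ∀ i, v i = ζ ^ χ i.castSucc * u i

/-- The affine coordinates `z_i / s^{χ_i}` (`i < n`), where `s` is meant to be a `χ_n`-th root
of `z_n`. -/
def affineChart (s : ℂ) (z : Fin (n + 1) → ℂ) : Fin n → ℂ :=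
  fun i => z i.castSucc / s ^ χ i.castSucc

lemma affineChart_mul_wsmul {t : ℂ} (ht : t ≠ 0) (s : ℂ) (z : Fin (n + 1) → ℂ) :
    affineChart χ (t * s) (wsmul χ t z) = affineChart χ s z := by
  ext i
  simp [affineChart, mul_pow, mul_div_mul_left _ _ (pow_ne_zero _ ht)]

lemma affineChart_wsmul_snoc {s : ℂ} (hs : s ≠ 0) (w : Fin n → ℂ) :
    affineChart χ s (wsmul χ s (Fin.snoc w 1)) = w := by
  ext i
  simp [affineChart, mul_div_cancel_left₀ _ (pow_ne_zero _ hs)]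

lemma wsmul_snoc_affineChart {s : ℂ} (hs : s ≠ 0) {z : Fin (n + 1) → ℂ}
    (hsz : s ^ χ (Fin.last n) = z (Fin.last n)) :
    wsmul χ s (Fin.snoc (affineChart χ s z) 1) = z := by
  ext j
  induction j using Fin.lastCases with
  | last => simp [hsz]
  | cast i => simp [affineChart, mul_div_cancel₀ _ (pow_ne_zero _ hs)]

lemma mk_affineChart_eq_of_pow_eq (hN : χ (Fin.last n) ≠ 0) {s s' : ℂ}
    (h : s ^ χ (Fin.last n) = s' ^ χ (Fin.last n)) (z : Fin (n + 1) → ℂ) :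
    Quot.mk (cyclicRel χ) (affineChart χ s z) = Quot.mk (cyclicRel χ) (affineChart χ s' z) := by
  rcases eq_or_ne s 0 with rfl | hs
  · rw [zero_pow hN, eq_comm, pow_eq_zero_iff hN] at h
    rw [h]
  have hs' : s' ≠ 0 := by rintro rfl; exact hs (pow_eq_zero_iff hN |>.mp (h.trans (zero_pow hN)))
  refine Quot.sound ⟨s / s', by rw [div_pow, h, div_self (pow_ne_zero _ hs')], fun i => ?_⟩
  simp only [affineChart, div_pow]
  field_simp

def toChart (z : Fin (n + 1) → ℂ) : Quot (cyclicRel χ) :=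
  Quot.mk _ (affineChart χ (z (Fin.last n) ^ ((χ (Fin.last n) : ℂ)⁻¹)) z)

variable {χ} (hN : χ (Fin.last n) ≠ 0)
include hN

lemma toChart_eq {s : ℂ} {z : Fin (n + 1) → ℂ} (hs : s ^ χ (Fin.last n) = z (Fin.last n)) :
    toChart χ z = Quot.mk _ (affineChart χ s z) :=
  mk_affineChart_eq_of_pow_eq χ hN (by rw [Complex.cpow_nat_inv_pow _ hN, hs]) z

lemma toChart_wsmul {t : ℂ} (ht : t ≠ 0) (z : Fin (n + 1) → ℂ) :
    toChart χ (wsmul χ t z) = toChart χ z := by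
  rw [toChart_eq hN (s := t * z (Fin.last n) ^ ((χ (Fin.last n) : ℂ)⁻¹)),
    affineChart_mul_wsmul χ ht]
  · rfl
  · rw [mul_pow, Complex.cpow_nat_inv_pow _ hN, wsmul_apply]

/-- Near `z₀` the chart is given by a continuous local branch of the `χ_n`-th root. -/
lemma continuousAt_toChart {z₀ : Fin (n + 1) → ℂ} (hz₀ : z₀ (Fin.last n) ≠ 0) :
    ContinuousAt (toChart χ) z₀ := by
  obtain ⟨ρ, hρ, hρN⟩ := exists_continuousAt_pow_eq hN hz₀
  have hρ₀ : ρ (z₀ (Fin.last n)) ≠ 0 := by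
    intro h; apply hz₀; rw [← hρN (z₀ _), h, zero_pow hN]
  have hchart : toChart χ = fun z => Quot.mk _ (affineChart χ (ρ (z (Fin.last n))) z) :=
    funext fun z => toChart_eq hN (hρN _)
  rw [hchart]
  refine continuous_quot_mk.continuousAt.comp (continuousAt_pi.2 fun i => ?_)
  exact (continuous_apply _).continuousAt.div
    ((hρ.comp (f := fun z : Fin (n + 1) → ℂ => z (Fin.last n))
      (continuous_apply _).continuousAt).pow _) (pow_ne_zero _ hρ₀)

end AffineChart

lemma snoc_one_ne_zero {n : ℕ} (w : Fin n → ℂ) : (Fin.snoc w 1 : Fin (n + 1) → ℂ) ≠ 0 :=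
  fun h => one_ne_zero (by simpa using congrFun h (Fin.last n) : (1 : ℂ) = 0)

section AffinePatch

variable {n : ℕ} (χ : Fin (n + 1) → ℕ)

def affinePatch : Set (WP (n + 1) χ) :=
  {x | ∃ z : Sph (n + 1), wpMk (n + 1) χ z = x ∧ (z : Fin (n + 1) → ℂ) (Fin.last n) ≠ 0}

lemma last_ne_zero_iff_of_wpMk_eq {z w : Sph (n + 1)} (h : wpMk (n + 1) χ z = wpMk (n + 1) χ w) :
    (z : Fin (n + 1) → ℂ) (Fin.last n) ≠ 0 ↔ (w : Fin (n + 1) → ℂ) (Fin.last n) ≠ 0 := by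
  obtain ⟨t, ht, hw⟩ := (wpMk_eq_wpMk_iff χ).mp h
  have ht0 : t ≠ 0 := norm_ne_zero_iff.mp (by simp [ht])
  simp [hw, ht0]

lemma preimage_affinePatch :
    Quot.mk (wRel (n + 1) χ) ⁻¹' affinePatch χ =
      {z : Sph (n + 1) | (z : Fin (n + 1) → ℂ) (Fin.last n) ≠ 0} :=
  Set.ext fun z =>
    ⟨fun ⟨_, hw, hwn⟩ => (last_ne_zero_iff_of_wpMk_eq χ hw).mp hwn, fun hz => ⟨z, rfl, hz⟩⟩

lemma isOpen_affinePatch : IsOpen (affinePatch χ) := by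
  rw [← isQuotientMap_quot_mk.isOpen_preimage, preimage_affinePatch]
  exact isOpen_ne_fun ((continuous_apply _).comp continuous_subtype_val) continuous_const

variable {χ} (hχ : ∀ i, 1 ≤ χ i)
include hχ

def fromChart (w : Fin n → ℂ) : Sph (n + 1) :=
  ⟨wNormalize χ (Fin.snoc w 1), sum_norm_wNormalize_sq hχ (snoc_one_ne_zero w)⟩

lemma fromChart_last_ne_zero (w : Fin n → ℂ) :
    (fromChart hχ w : Fin (n + 1) → ℂ) (Fin.last n) ≠ 0 := by
  have := (wScale_pos hχ (snoc_one_ne_zero w)).ne'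
  simp [fromChart, wNormalize, this]

lemma continuous_fromChart : Continuous fun w => (fromChart hχ w : Fin (n + 1) → ℂ) := by
  have hsnoc : Continuous fun w : Fin n → ℂ => (Fin.snoc w 1 : Fin (n + 1) → ℂ) := by
    fun_prop
  have hscale : Continuous fun w : Fin n → ℂ => wScale χ (Fin.snoc w 1) :=
    continuous_iff_continuousAt.2 fun w =>
      (continuousAt_wScale hχ (snoc_one_ne_zero w)).comp (g := wScale χ)
        (f := fun w : Fin n → ℂ => (Fin.snoc w 1 : Fin (n + 1) → ℂ)) hsnoc.continuousAt
  exact (continuous_wsmul χ).comp ((Complex.continuous_ofReal.comp hscale).prodMk hsnoc)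

lemma wpMk_fromChart_eq {u v : Fin n → ℂ} (h : cyclicRel χ u v) :
    wpMk (n + 1) χ (fromChart hχ u) = wpMk (n + 1) χ (fromChart hχ v) := by
  obtain ⟨ζ, hζ, hv⟩ := h
  have hζ0 : ζ ≠ 0 := by rintro rfl; simp [zero_pow (Nat.one_le_iff_ne_zero.mp (hχ _))] at hζ
  have hsnoc : (Fin.snoc v 1 : Fin (n + 1) → ℂ) = wsmul χ ζ (Fin.snoc u 1) := by
    ext j
    induction j using Fin.lastCases with
    | last => simp [hζ]
    | cast i => simp [hv i]
  exact wpMk_eq_of_wNormalize_wsmul hχ (snoc_one_ne_zero u) hζ0 rfl (by simp [fromChart, hsnoc])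

lemma toChart_eq_of_wRel {z w : Sph (n + 1)} (h : wRel (n + 1) χ z w) :
    toChart χ (z : Fin (n + 1) → ℂ) = toChart χ w := by
  obtain ⟨t, ht, hw⟩ := h
  rw [show (w : Fin (n + 1) → ℂ) = wsmul χ t z from funext hw,
    toChart_wsmul (Nat.one_le_iff_ne_zero.mp (hχ _)) (norm_ne_zero_iff.mp (by simp [ht]))]

lemma toChart_fromChart (w : Fin n → ℂ) : toChart χ (fromChart hχ w) = Quot.mk _ w := by
  have hl := (wScale_pos hχ (snoc_one_ne_zero w)).ne'
  rw [toChart_eq (Nat.one_le_iff_ne_zero.mp (hχ _)) (s := wScale χ (Fin.snoc w 1))]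
  · exact congrArg _ (affineChart_wsmul_snoc χ (by exact_mod_cast hl) w)
  · simp [fromChart, wNormalize]

lemma wpMk_fromChart_affineChart {s : ℂ} (hs : s ≠ 0) {z : Sph (n + 1)}
    (hsz : s ^ χ (Fin.last n) = (z : Fin (n + 1) → ℂ) (Fin.last n)) :
    wpMk (n + 1) χ (fromChart hχ (affineChart χ s z)) = wpMk (n + 1) χ z :=
  wpMk_eq_of_wNormalize_wsmul hχ (snoc_one_ne_zero _) hs rfl
    (by rw [wsmul_snoc_affineChart χ hs hsz, wNormalize_of_sum_norm_sq hχ z.2])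

lemma continuous_toChart_preimage_affinePatch :
    Continuous fun z : Quot.mk (wRel (n + 1) χ) ⁻¹' affinePatch χ =>
      toChart χ (z : Fin (n + 1) → ℂ) := by
  refine continuous_iff_continuousAt.2 fun z => ?_
  have hz : (z.1 : Fin (n + 1) → ℂ) (Fin.last n) ≠ 0 := by
    simpa [preimage_affinePatch] using z.2
  exact (continuousAt_toChart (Nat.one_le_iff_ne_zero.mp (hχ _)) hz).comp (x := z)
    (f := fun z : Quot.mk (wRel (n + 1) χ) ⁻¹' affinePatch χ => (z : Fin (n + 1) → ℂ))
    (continuous_subtype_val.comp continuous_subtype_val).continuousAt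

def affinePatchHomeomorph : affinePatch χ ≃ₜ Quot (cyclicRel χ) where
  toFun x := Quot.lift (fun z : Sph (n + 1) => toChart χ z) (fun _ _ => toChart_eq_of_wRel hχ) x.1
  invFun := Quot.lift
    (fun w => ⟨wpMk (n + 1) χ (fromChart hχ w), fromChart hχ w, rfl, fromChart_last_ne_zero hχ w⟩)
    fun _ _ h => Subtype.ext (wpMk_fromChart_eq hχ h)
  left_inv := by
    rintro ⟨_, z, rfl, hz⟩
    have hN := Nat.one_le_iff_ne_zero.mp (hχ (Fin.last n))
    have hroot := Complex.cpow_nat_inv_pow ((z : Fin (n + 1) → ℂ) (Fin.last n)) hN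
    have hs : (z : Fin (n + 1) → ℂ) (Fin.last n) ^ ((χ (Fin.last n) : ℂ)⁻¹) ≠ 0 :=
      fun h => hz (by rw [← hroot, h, zero_pow hN])
    exact Subtype.ext (wpMk_fromChart_affineChart hχ hs hroot)
  right_inv := by
    rintro ⟨w⟩
    exact toChart_fromChart hχ w
  continuous_toFun :=
    ((isQuotientMap_quot_mk.restrictPreimage_isOpen (isOpen_affinePatch χ)).continuous_iff).2
      (continuous_toChart_preimage_affinePatch hχ)
  continuous_invFun :=
    continuous_quot_lift _ ((continuous_quot_mk.comp
      ((continuous_fromChart hχ).subtype_mk _)).subtype_mk _)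

end AffinePatch

theorem statement19_general (n : ℕ) (χ : Fin (n + 1) → ℕ) (hχ : ∀ i, 1 ≤ χ i) :
    (∀ z w : Sph (n + 1), wpMk (n + 1) χ z = wpMk (n + 1) χ w →
      ((z : Fin (n + 1) → ℂ) (Fin.last n) ≠ 0 ↔ (w : Fin (n + 1) → ℂ) (Fin.last n) ≠ 0)) ∧
    IsOpen {x : WP (n + 1) χ | ∃ z : Sph (n + 1), wpMk (n + 1) χ z = x ∧
      (z : Fin (n + 1) → ℂ) (Fin.last n) ≠ 0} ∧
    Nonempty (
      {x : WP (n + 1) χ // ∃ z : Sph (n + 1), wpMk (n + 1) χ z = x ∧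
        (z : Fin (n + 1) → ℂ) (Fin.last n) ≠ 0} ≃ₜ
      Quot (fun u v : Fin n → ℂ => ∃ ζ : ℂ, ζ ^ χ (Fin.last n) = 1 ∧
        ∀ i, v i = ζ ^ χ i.castSucc * u i)) :=
  ⟨fun _ _ => last_ne_zero_iff_of_wpMk_eq χ, isOpen_affinePatch χ, ⟨affinePatchHomeomorph hχ⟩⟩

/-- The condition `z_n ≠ 0` is independent of the representative
`z ∈ S^{2n+1}`; the subspace `U = {[z]_χ : z_n ≠ 0}` of `P(χ)` is open; and `U` is
homeomorphic to the orbit space `ℂ^n/μ_{χ_n}`, where `ζ ∈ μ_{χ_n}` acts on `ℂ^n` by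
`ζ·(w_0, …, w_{n-1}) = (ζ^{χ_0}w_0, …, ζ^{χ_{n-1}}w_{n-1})`. -/
theorem statement19 (n : ℕ) (hn : 1 ≤ n) (χ : Fin (n + 1) → ℕ) (hχ : ∀ i, 1 ≤ χ i) :
    (∀ z w : Sph (n + 1), wpMk (n + 1) χ z = wpMk (n + 1) χ w →
      ((z : Fin (n + 1) → ℂ) (Fin.last n) ≠ 0 ↔ (w : Fin (n + 1) → ℂ) (Fin.last n) ≠ 0)) ∧
    IsOpen {x : WP (n + 1) χ | ∃ z : Sph (n + 1), wpMk (n + 1) χ z = x ∧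
      (z : Fin (n + 1) → ℂ) (Fin.last n) ≠ 0} ∧
    Nonempty (
      {x : WP (n + 1) χ // ∃ z : Sph (n + 1), wpMk (n + 1) χ z = x ∧
        (z : Fin (n + 1) → ℂ) (Fin.last n) ≠ 0} ≃ₜ
      Quot (fun u v : Fin n → ℂ => ∃ ζ : ℂ, ζ ^ χ (Fin.last n) = 1 ∧
        ∀ i, v i = ζ ^ χ i.castSucc * u i)) :=
  statement19_general n χ hχ
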